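/- arXiv:1707.01569 — 2 statements merged into one kernel-verified Lean document; each statement's English description precedes it below -/
import Mathlib

section
/- Let f = h + conj(g) be a sense-preserving harmonic mapping in D. Suppose there exist β < -2 and r₀ ∈ (1 - 1/(2e), 1) such that |P_f(z)| ≤ 1/(1-|z|²) + β/((1-|z|²)·log(1/(1-|z|²))) for all r₀ < |z| < 1, and g'(0) = 0 with f normalized (h'(0)=1). Then h, g and f are bounded in D. -/
open Complex Metric

/-- Pre-Schwarzian derivative of an analytic function. -/
noncomputable def pd (F : ℂ → ℂ) (z : ℂ) : ℂ := deriv (deriv F) z / deriv F z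

/-- Dilatation of the harmonic mapping `h + conj g`. -/
noncomputable def dil (h g : ℂ → ℂ) (z : ℂ) : ℂ := deriv g z / deriv h z

/-- Pre-Schwarzian derivative of the harmonic mapping `h + conj g`. -/
noncomputable def PH (h g : ℂ → ℂ) (z : ℂ) : ℂ :=
  pd h z - (starRingEnd ℂ) (dil h g z) * deriv (dil h g) z / ((1 - ‖dil h g z‖ ^ 2 : ℝ) : ℂ)

/-- Pre-Schwarzian norm. -/
noncomputable def pnorm (P : ℂ → ℂ) : ℝ :=
  ⨆ z : Metric.ball (0 : ℂ) 1, (1 - ‖(z : ℂ)‖ ^ 2) * ‖P (z : ℂ)‖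

/-- The range whose boundedness expresses finiteness of the pre-Schwarzian norm. -/
def pbdd (P : ℂ → ℂ) : Prop :=
  BddAbove (Set.range fun z : Metric.ball (0 : ℂ) 1 => (1 - ‖(z : ℂ)‖ ^ 2) * ‖P (z : ℂ)‖)

/-- `h + conj g` is a sense-preserving harmonic mapping in the unit disk. -/
def SPH (h g : ℂ → ℂ) : Prop :=
  DifferentiableOn ℂ h (Metric.ball (0 : ℂ) 1) ∧
  DifferentiableOn ℂ g (Metric.ball (0 : ℂ) 1) ∧ g 0 = 0 ∧
  ∀ z ∈ Metric.ball (0 : ℂ) 1, ‖deriv g z‖ < ‖deriv h z‖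

/-!
Write `ω = g'/h'` for the dilatation. Since `ω(0) = 0`, the Schwarz lemma and the Schwarz–Pick
lemma bound the correction term `conj ω · ω' / (1 - |ω|²)` of the harmonic pre-Schwarzian by
`|z| / (1 - |z|²)`, so near the boundary the hypothesis gives
`|h''/h'| ≤ 1/(1 - |z|) + β / ((1 - |z|²) log (1/(1 - |z|²)))`.
On the ray `z(s) = (1 - e^{-s}) e` this becomes `|(h' ∘ z)'| ≤ (1 + β/(2s)) |h' ∘ z|`, hence
`|h'(z(s))| ≤ C e^s s^{β/2}`. As `|z'(s)| = e^{-s}` and `|g'| < |h'|`, the derivatives of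
`h ∘ z` and `g ∘ z` are at most `C s^{β/2}`, which is integrable at infinity because `β/2 < -1`.
So `h` and `g` are bounded along the rays outside a fixed circle, and by compactness inside it.
-/

open Set Filter Topology ComplexConjugate

namespace Complex

noncomputable def mobius (c z : ℂ) : ℂ := (c + z) / (1 + conj c * z)

lemma normSq_one_add_conj_mul_sub_normSq_add (c z : ℂ) :
    normSq (1 + conj c * z) - normSq (c + z) = (1 - normSq c) * (1 - normSq z) := by
  simp only [normSq_apply, add_re, add_im, mul_re, mul_im, conj_re, conj_im, one_re, one_im]
  ring

lemma norm_add_lt_norm_one_add_conj_mul {c z : ℂ} (hc : ‖c‖ < 1) (hz : ‖z‖ < 1) :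
    ‖c + z‖ < ‖1 + conj c * z‖ := by
  have hc' : normSq c < 1 := by rw [normSq_eq_norm_sq]; nlinarith [norm_nonneg c]
  have hz' : normSq z < 1 := by rw [normSq_eq_norm_sq]; nlinarith [norm_nonneg z]
  have key := normSq_one_add_conj_mul_sub_normSq_add c z
  rw [normSq_eq_norm_sq, normSq_eq_norm_sq] at key
  exact lt_of_pow_lt_pow_left₀ 2 (norm_nonneg _)
    (by nlinarith [mul_pos (sub_pos.2 hc') (sub_pos.2 hz')])

lemma one_add_conj_mul_ne_zero {c z : ℂ} (hc : ‖c‖ < 1) (hz : ‖z‖ < 1) :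
    1 + conj c * z ≠ 0 :=
  norm_pos_iff.1 ((norm_nonneg _).trans_lt (norm_add_lt_norm_one_add_conj_mul hc hz))

lemma mapsTo_mobius {c : ℂ} (hc : ‖c‖ < 1) : MapsTo (mobius c) (ball 0 1) (ball 0 1) := by
  intro z hz
  rw [mem_ball_zero_iff] at hz ⊢
  have hlt := norm_add_lt_norm_one_add_conj_mul hc hz
  rwa [mobius, norm_div, div_lt_one ((norm_nonneg _).trans_lt hlt)]

lemma hasDerivAt_mobius {c z : ℂ} (hc : ‖c‖ < 1) (hz : ‖z‖ < 1) :
    HasDerivAt (mobius c) ((1 - normSq c) / (1 + conj c * z) ^ 2) z := by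
  have hden := one_add_conj_mul_ne_zero hc hz
  refine (((hasDerivAt_id' z).const_add c).div
    (((hasDerivAt_id' z).const_mul (conj c)).const_add 1) hden).congr_deriv ?_
  rw [normSq_eq_conj_mul_self]
  congr 1
  ring

lemma differentiableOn_mobius {c : ℂ} (hc : ‖c‖ < 1) :
    DifferentiableOn ℂ (mobius c) (ball 0 1) :=
  fun _ hz ↦ (hasDerivAt_mobius hc (mem_ball_zero_iff.1 hz)).differentiableAt.differentiableWithinAt

theorem norm_deriv_mul_le_of_mapsTo_ball {ω : ℂ → ℂ} (hd : DifferentiableOn ℂ ω (ball 0 1))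
    (hm : MapsTo ω (ball 0 1) (ball 0 1)) {a : ℂ} (ha : ‖a‖ < 1) :
    ‖deriv ω a‖ * (1 - ‖a‖ ^ 2) ≤ 1 - ‖ω a‖ ^ 2 := by
  set b := ω a
  have hb : ‖b‖ < 1 := mem_ball_zero_iff.1 (hm (mem_ball_zero_iff.2 ha))
  have hb' : ‖-b‖ < 1 := by rwa [norm_neg]
  have hb2 : 0 < 1 - ‖b‖ ^ 2 := by nlinarith [norm_nonneg b]
  -- `F` fixes `0`, so the Schwarz lemma bounds `F'(0) = ω'(a) (1 - |a|²) / (1 - |b|²)`.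
  set F := mobius (-b) ∘ ω ∘ mobius a
  have hF0 : F 0 = 0 := by simp [F, mobius, b]
  have hFd : DifferentiableOn ℂ F (ball 0 1) :=
    (differentiableOn_mobius hb').comp (hd.comp (differentiableOn_mobius ha) (mapsTo_mobius ha))
      (hm.comp (mapsTo_mobius ha))
  have hFm : MapsTo F (ball 0 1) (ball 0 1) :=
    (mapsTo_mobius hb').comp (hm.comp (mapsTo_mobius ha))
  have hmobius_a : mobius a 0 = a := by simp [mobius]
  have hω : HasDerivAt ω (deriv ω a) (mobius a 0) := by
    rw [hmobius_a]
    exact (hd.differentiableAt (isOpen_ball.mem_nhds (mem_ball_zero_iff.2 ha))).hasDerivAt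
  have hF : HasDerivAt F ((1 - normSq (-b)) / (1 + conj (-b) * b) ^ 2 *
      (deriv ω a * ((1 - normSq a) / (1 + conj a * 0) ^ 2))) 0 :=
    (hasDerivAt_mobius hb' hb).comp_of_eq 0 (hω.comp 0 (hasDerivAt_mobius ha (by simp)))
      (by simp [hmobius_a, b])
  have hS := norm_deriv_le_one_of_mapsTo_ball hFd
    (by rw [hF0]; exact hFm.mono_right ball_subset_closedBall) one_pos
  have hnormSq : ∀ c : ℂ, ‖c‖ < 1 → ‖(1 - normSq c : ℂ)‖ = 1 - ‖c‖ ^ 2 := fun c hc ↦ by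
    rw [normSq_eq_norm_sq, ← ofReal_one, ← ofReal_sub, norm_real, Real.norm_of_nonneg]
    nlinarith [norm_nonneg c]
  have hb0 : (1 - normSq b : ℂ) ≠ 0 := by
    rw [← norm_ne_zero_iff, hnormSq b hb]; exact hb2.ne'
  have hval : deriv F 0 = deriv ω a * (1 - normSq a) / (1 - normSq b) := by
    rw [hF.deriv, normSq_neg, map_neg, neg_mul, ← normSq_eq_conj_mul_self, ← sub_eq_add_neg,
      mul_zero, add_zero]
    field_simp
  rwa [hval, norm_div, norm_mul, hnormSq a ha, hnormSq b hb, div_le_one hb2] at hS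

end Complex

namespace SPH

variable {h g : ℂ → ℂ}

lemma deriv_ne_zero (hf : SPH h g) {z : ℂ} (hz : z ∈ ball 0 1) : deriv h z ≠ 0 :=
  norm_pos_iff.1 ((norm_nonneg _).trans_lt (hf.2.2.2 z hz))

lemma differentiableOn_deriv (hf : SPH h g) : DifferentiableOn ℂ (deriv h) (ball 0 1) :=
  (hf.1.analyticOnNhd isOpen_ball).deriv.differentiableOn

lemma differentiableOn_dil (hf : SPH h g) : DifferentiableOn ℂ (dil h g) (ball 0 1) :=
  ((hf.2.1.analyticOnNhd isOpen_ball).deriv.differentiableOn.div hf.differentiableOn_deriv)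
    fun _ hz ↦ hf.deriv_ne_zero hz

lemma mapsTo_dil (hf : SPH h g) : MapsTo (dil h g) (ball 0 1) (ball 0 1) := fun z hz ↦ by
  rw [mem_ball_zero_iff, dil, norm_div, div_lt_one (norm_pos_iff.2 (hf.deriv_ne_zero hz))]
  exact hf.2.2.2 z hz

lemma norm_pd_le (hf : SPH h g) (hg0 : deriv g 0 = 0) {z : ℂ} (hz : ‖z‖ < 1) :
    ‖pd h z‖ ≤ ‖PH h g z‖ + ‖z‖ / (1 - ‖z‖ ^ 2) := by
  set ω := dil h g
  have hzD : z ∈ ball (0 : ℂ) 1 := mem_ball_zero_iff.2 hz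
  have hω : ‖ω z‖ ≤ ‖z‖ :=
    norm_le_norm_of_mapsTo_ball hf.differentiableOn_dil
      (hf.mapsTo_dil.mono_right ball_subset_closedBall) (by simp [ω, dil, hg0]) hz
  have hpick := norm_deriv_mul_le_of_mapsTo_ball hf.differentiableOn_dil hf.mapsTo_dil hz
  have hω1 : 0 < 1 - ‖ω z‖ ^ 2 := by
    nlinarith [norm_nonneg (ω z), mem_ball_zero_iff.1 (hf.mapsTo_dil hzD)]
  have hz1 : 0 < 1 - ‖z‖ ^ 2 := by nlinarith [norm_nonneg z]
  have hcorr : ‖conj (ω z) * deriv ω z / ((1 - ‖ω z‖ ^ 2 : ℝ) : ℂ)‖ ≤ ‖z‖ / (1 - ‖z‖ ^ 2) := by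
    rw [norm_div, norm_mul, RCLike.norm_conj, norm_real, Real.norm_of_nonneg hω1.le,
      div_le_div_iff₀ hω1 hz1]
    nlinarith [mul_le_mul hω hpick (by positivity) (norm_nonneg z), norm_nonneg (deriv ω z)]
  calc ‖pd h z‖
      = ‖PH h g z + conj (ω z) * deriv ω z / ((1 - ‖ω z‖ ^ 2 : ℝ) : ℂ)‖ := by
        rw [PH, sub_add_cancel]
    _ ≤ ‖PH h g z‖ + ‖z‖ / (1 - ‖z‖ ^ 2) := (norm_add_le _ _).trans (by gcongr)

end SPH

lemma exp_neg_mul_le_one_add {β s t : ℝ} (hβ : β ≤ 0) (hs : 0 < s)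
    (ht : t = 1 - Real.exp (-s)) :
    Real.exp (-s) * (1 / (1 - t ^ 2) + β / ((1 - t ^ 2) * Real.log (1 / (1 - t ^ 2)))
      + t / (1 - t ^ 2)) ≤ 1 + β / 2 / s := by
  set q := Real.exp (-s)
  have hq : 0 < q := Real.exp_pos _
  have hq1 : q < 1 := Real.exp_lt_one_iff.2 (neg_neg_of_pos hs)
  have ht0 : 0 < t := by linarith
  have ht1 : t < 1 := by linarith
  have hsq : 1 - t ^ 2 = q * (1 + t) := by rw [ht]; ring
  have hL : Real.log (1 / (1 - t ^ 2)) = s - Real.log (1 + t) := by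
    rw [hsq, one_div, Real.log_inv, Real.log_mul hq.ne' (by linarith), Real.log_exp]; ring
  have hL0 : 0 < Real.log (1 / (1 - t ^ 2)) :=
    Real.log_pos (by rw [one_div]; exact one_lt_inv₀ (by nlinarith) |>.2 (by nlinarith))
  have hLs : Real.log (1 / (1 - t ^ 2)) ≤ s := by
    rw [hL]; linarith [Real.log_nonneg (by linarith : (1 : ℝ) ≤ 1 + t)]
  have hkey : β / ((1 + t) * Real.log (1 / (1 - t ^ 2))) ≤ β / 2 / s := by
    rw [div_div, div_le_div_iff₀ (by positivity) (by positivity)]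
    nlinarith [mul_le_mul (by linarith : 1 + t ≤ 2) hLs hL0.le (by norm_num)]
  calc Real.exp (-s) * (1 / (1 - t ^ 2) + β / ((1 - t ^ 2) * Real.log (1 / (1 - t ^ 2)))
        + t / (1 - t ^ 2))
      = 1 + β / ((1 + t) * Real.log (1 / (1 - t ^ 2))) := by
        rw [hsq]; field_simp; ring
    _ ≤ 1 + β / 2 / s := by linarith

section Comparison

variable {E : Type*} [NormedAddCommGroup E] {u u' : ℝ → E} {a b : ℝ}

theorem norm_le_norm_mul_exp_of_norm_deriv_le [InnerProductSpace ℝ E] {Φ φ : ℝ → ℝ}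
    (hab : a ≤ b) (hu : ∀ x ∈ Icc a b, HasDerivAt u (u' x) x)
    (hΦ : ∀ x ∈ Icc a b, HasDerivAt Φ (φ x) x) (hle : ∀ x ∈ Ioo a b, ‖u' x‖ ≤ φ x * ‖u x‖) :
    ‖u b‖ ≤ ‖u a‖ * Real.exp (Φ b - Φ a) := by
  -- `‖u‖² e^{-2Φ}` is antitone, because `(‖u‖²)' = 2⟪u, u'⟫ ≤ 2φ‖u‖²`.
  set N : ℝ → ℝ := fun x ↦ ‖u x‖ ^ 2 * Real.exp (-(2 * Φ x))
  set N' : ℝ → ℝ := fun x ↦ 2 * inner ℝ (u x) (u' x) * Real.exp (-(2 * Φ x)) +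
    ‖u x‖ ^ 2 * (Real.exp (-(2 * Φ x)) * -(2 * φ x))
  have hN : ∀ x ∈ Icc a b, HasDerivAt N (N' x) x := fun x hx ↦
    (hu x hx).norm_sq.mul ((((hΦ x hx).const_mul 2).neg).exp)
  have hanti : AntitoneOn N (Icc a b) := by
    refine antitoneOn_of_hasDerivWithinAt_nonpos (convex_Icc a b) (f' := N')
      (fun x hx ↦ (hN x hx).continuousAt.continuousWithinAt) (fun x hx ↦ ?_) (fun x hx ↦ ?_)
    · rw [interior_Icc] at hx
      exact (hN x (Ioo_subset_Icc_self hx)).hasDerivWithinAt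
    · rw [interior_Icc] at hx
      have hinner : inner ℝ (u x) (u' x) ≤ φ x * ‖u x‖ ^ 2 :=
        (real_inner_le_norm _ _).trans (by nlinarith [hle x hx, norm_nonneg (u x)])
      nlinarith [Real.exp_pos (-(2 * Φ x))]
  have hNab := hanti (left_mem_Icc.2 hab) (right_mem_Icc.2 hab) hab
  have hexp : Real.exp (-(2 * Φ b)) * Real.exp (2 * (Φ b - Φ a)) = Real.exp (-(2 * Φ a)) := by
    rw [← Real.exp_add]; ring_nf
  refine le_of_pow_le_pow_left₀ two_ne_zero (by positivity) ?_
  rw [mul_pow, ← Real.exp_nat_mul]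
  push_cast
  nlinarith [Real.exp_pos (2 * (Φ b - Φ a)), Real.exp_pos (-(2 * Φ b))]

theorem norm_sub_le_sub_of_norm_deriv_le [NormedSpace ℝ E] {G G' : ℝ → ℝ} (hab : a ≤ b)
    (hu : ∀ x ∈ Icc a b, HasDerivAt u (u' x) x) (hG : ∀ x ∈ Icc a b, HasDerivAt G (G' x) x)
    (hle : ∀ x ∈ Ico a b, ‖u' x‖ ≤ G' x) :
    ‖u b - u a‖ ≤ G b - G a :=
  image_norm_le_of_norm_deriv_right_le_deriv_boundary' (f := fun x ↦ u x - u a)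
    (B := fun x ↦ G x - G a)
    (fun x hx ↦ ((hu x hx).sub_const (u a)).continuousAt.continuousWithinAt)
    (fun x hx ↦ ((hu x (Ico_subset_Icc_self hx)).sub_const (u a)).hasDerivWithinAt)
    (by simp) (fun x hx ↦ ((hG x hx).sub_const (G a)).continuousAt.continuousWithinAt)
    (fun x hx ↦ ((hG x (Ico_subset_Icc_self hx)).sub_const (G a)).hasDerivWithinAt) hle
    (right_mem_Icc.2 hab)

end Comparison

noncomputable def diskRay (e : ℂ) (s : ℝ) : ℂ := ((1 - Real.exp (-s) : ℝ) : ℂ) * e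

section DiskRay

variable {e : ℂ} {s : ℝ}

lemma norm_diskRay (he : ‖e‖ = 1) (hs : 0 ≤ s) : ‖diskRay e s‖ = 1 - Real.exp (-s) := by
  rw [diskRay, norm_mul, he, mul_one, norm_real,
    Real.norm_of_nonneg (sub_nonneg.2 (Real.exp_le_one_iff.2 (neg_nonpos.2 hs)))]

lemma diskRay_mem_ball (he : ‖e‖ = 1) (hs : 0 ≤ s) : diskRay e s ∈ ball (0 : ℂ) 1 := by
  rw [mem_ball_zero_iff, norm_diskRay he hs]
  linarith [Real.exp_pos (-s)]

lemma diskRay_norm_div_norm {z : ℂ} (hz : z ∈ ball (0 : ℂ) 1) (hz0 : z ≠ 0) :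
    diskRay (z / ‖z‖) (-Real.log (1 - ‖z‖)) = z := by
  have hz1 : 0 < 1 - ‖z‖ := sub_pos.2 (mem_ball_zero_iff.1 hz)
  rw [diskRay, neg_neg, Real.exp_log hz1, sub_sub_cancel, mul_div_cancel₀ _ (by simpa using hz0)]

lemma hasDerivAt_comp_diskRay {F : ℂ → ℂ} (hF : DifferentiableAt ℂ F (diskRay e s)) :
    HasDerivAt (fun s ↦ F (diskRay e s)) (deriv F (diskRay e s) * (Real.exp (-s) * e)) s := by
  have hr : HasDerivAt (fun s : ℝ ↦ 1 - Real.exp (-s)) (Real.exp (-s)) s := by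
    simpa using ((hasDerivAt_neg s).exp).const_sub 1
  exact (hF.hasDerivAt.comp s (hr.ofReal_comp.mul_const e)).congr_deriv (by push_cast; ring)

end DiskRay

section Radial

variable {e : ℂ} {p a S : ℝ}

lemma norm_diskRay_le_of_norm_deriv_le {φ : ℂ → ℂ} (hφ : DifferentiableOn ℂ φ (ball 0 1))
    (he : ‖e‖ = 1) (ha : 0 < a) (haS : a ≤ S)
    (hle : ∀ s ∈ Ioo a S,
      ‖deriv φ (diskRay e s)‖ * Real.exp (-s) ≤ (1 + p / s) * ‖φ (diskRay e s)‖) :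
    ‖φ (diskRay e S)‖ ≤ ‖φ (diskRay e a)‖ * Real.exp (-a) * a ^ (-p) * (Real.exp S * S ^ p) := by
  have hpos : ∀ s ∈ Icc a S, 0 < s := fun s hs ↦ ha.trans_le hs.1
  have hgrowth := norm_le_norm_mul_exp_of_norm_deriv_le (Φ := fun s ↦ s + p * Real.log s)
    (φ := fun s ↦ 1 + p / s) haS
    (fun s hs ↦ hasDerivAt_comp_diskRay
      (hφ.differentiableAt (isOpen_ball.mem_nhds (diskRay_mem_ball he (hpos s hs).le))))
    (fun s hs ↦ ((hasDerivAt_id s).add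
      ((Real.hasDerivAt_log (hpos s hs).ne').const_mul p)).congr_deriv (by simp [div_eq_mul_inv]))
    (fun s hs ↦ by
      rw [norm_mul, norm_mul, norm_real, he, mul_one, Real.norm_of_nonneg (Real.exp_pos _).le]
      exact hle s hs)
  have hexp : Real.exp (S + p * Real.log S - (a + p * Real.log a))
      = Real.exp (-a) * a ^ (-p) * (Real.exp S * S ^ p) := by
    rw [Real.rpow_def_of_pos ha, Real.rpow_def_of_pos (ha.trans_le haS), ← Real.exp_add,
      ← Real.exp_add, ← Real.exp_add]
    ring_nf
  rw [hexp] at hgrowth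
  simpa only [mul_assoc] using hgrowth

lemma norm_sub_diskRay_le {F : ℂ → ℂ} (hF : DifferentiableOn ℂ F (ball 0 1)) (he : ‖e‖ = 1)
    {C : ℝ} (hp : p < -1) (ha : 0 < a) (haS : a ≤ S) (hC : 0 ≤ C)
    (hle : ∀ s ∈ Icc a S, ‖deriv F (diskRay e s)‖ ≤ C * (Real.exp s * s ^ p)) :
    ‖F (diskRay e S) - F (diskRay e a)‖ ≤ C * a ^ (p + 1) / -(p + 1) := by
  have hpos : ∀ s ∈ Icc a S, 0 < s := fun s hs ↦ ha.trans_le hs.1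
  -- `C s^(p+1)/(p+1)` is a negative primitive of the bound `C s^p` on `‖(F ∘ diskRay e)'‖`.
  have hinc := norm_sub_le_sub_of_norm_deriv_le (G := fun s ↦ C * s ^ (p + 1) / (p + 1))
    (G' := fun s ↦ C * s ^ p) haS
    (fun s hs ↦ hasDerivAt_comp_diskRay
      (hF.differentiableAt (isOpen_ball.mem_nhds (diskRay_mem_ball he (hpos s hs).le))))
    (fun s hs ↦ (((Real.hasDerivAt_rpow_const (Or.inl (hpos s hs).ne')).const_mul C).div_const
      (p + 1)).congr_deriv (by field_simp [(by linarith : p + 1 ≠ 0)]; ring_nf))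
    (fun s hs ↦ by
      have hs' := Ico_subset_Icc_self hs
      rw [norm_mul, norm_mul, norm_real, he, mul_one, Real.norm_of_nonneg (Real.exp_pos _).le]
      calc ‖deriv F (diskRay e s)‖ * Real.exp (-s)
          ≤ C * (Real.exp s * s ^ p) * Real.exp (-s) := by gcongr; exact hle s hs'
        _ = C * s ^ p := by rw [mul_comm (Real.exp s), mul_assoc, mul_assoc, ← Real.exp_add]; simp)
  have hS : C * S ^ (p + 1) / (p + 1) ≤ 0 :=
    div_nonpos_of_nonneg_of_nonpos
      (mul_nonneg hC (Real.rpow_nonneg (ha.le.trans haS) _)) (by linarith)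
  calc _ ≤ C * S ^ (p + 1) / (p + 1) - C * a ^ (p + 1) / (p + 1) := hinc
    _ ≤ C * a ^ (p + 1) / -(p + 1) := by rw [div_neg]; linarith

end Radial

lemma exists_norm_le_of_norm_sub_diskRay_le {F : ℂ → ℂ} (hF : ContinuousOn F (ball 0 1))
    {a K : ℝ} (ha : 0 < a)
    (hK : ∀ e : ℂ, ‖e‖ = 1 → ∀ S, a ≤ S → ‖F (diskRay e S) - F (diskRay e a)‖ ≤ K) :
    ∃ M, ∀ z ∈ ball (0 : ℂ) 1, ‖F z‖ ≤ M := by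
  set r := 1 - Real.exp (-a)
  have hr0 : 0 < r := sub_pos.2 (Real.exp_lt_one_iff.2 (neg_neg_of_pos ha))
  have hr1 : r < 1 := by linarith [Real.exp_pos (-a)]
  obtain ⟨M₀, hM₀⟩ := (isCompact_closedBall (0 : ℂ) r).exists_bound_of_continuousOn
    (hF.mono (closedBall_subset_ball hr1))
  have hK0 : 0 ≤ K := (norm_nonneg _).trans (hK 1 norm_one a le_rfl)
  refine ⟨M₀ + K, fun z hz ↦ ?_⟩
  rcases le_or_gt ‖z‖ r with hzr | hzr
  · linarith [hM₀ z (mem_closedBall_zero_iff.2 hzr)]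
  have hz0 : z ≠ 0 := norm_pos_iff.1 (hr0.trans hzr)
  have he : ‖z / ‖z‖‖ = 1 := by
    rw [norm_div, norm_real, norm_norm, div_self (norm_ne_zero_iff.2 hz0)]
  have hz1 : 0 < 1 - ‖z‖ := sub_pos.2 (mem_ball_zero_iff.1 hz)
  have haS : a ≤ -Real.log (1 - ‖z‖) := by
    rw [le_neg, Real.log_le_iff_le_exp hz1]; linarith
  have hKz := hK _ he _ haS
  rw [diskRay_norm_div_norm hz hz0] at hKz
  have hM₀a := hM₀ _ (mem_closedBall_zero_iff.2 (norm_diskRay he ha.le).le)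
  calc ‖F z‖ = ‖F (diskRay (z / ‖z‖) a) + (F z - F (diskRay (z / ‖z‖) a))‖ := by
        rw [add_sub_cancel]
    _ ≤ M₀ + K := (norm_add_le _ _).trans (add_le_add hM₀a hKz)

namespace SPH

variable {h g : ℂ → ℂ} {β r₀ : ℝ}

lemma norm_deriv_deriv_diskRay_le (hf : SPH h g) (hg0 : deriv g 0 = 0) (hβ : β ≤ 0)
    (hP : ∀ z : ℂ, r₀ < ‖z‖ → ‖z‖ < 1 →
      ‖PH h g z‖ ≤ 1 / (1 - ‖z‖ ^ 2) + β / ((1 - ‖z‖ ^ 2) * Real.log (1 / (1 - ‖z‖ ^ 2))))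
    {e : ℂ} (he : ‖e‖ = 1) {s : ℝ} (hs : 0 < s)
    (hr₀ : r₀ < 1 - Real.exp (-s)) :
    ‖deriv (deriv h) (diskRay e s)‖ * Real.exp (-s) ≤
      (1 + β / 2 / s) * ‖deriv h (diskRay e s)‖ := by
  set z := diskRay e s
  have hz : z ∈ ball (0 : ℂ) 1 := diskRay_mem_ball he hs.le
  have ht := norm_diskRay he hs.le
  have hz1 : ‖z‖ < 1 := mem_ball_zero_iff.1 hz
  have hpd : deriv (deriv h) z = pd h z * deriv h z := by
    rw [pd, div_mul_cancel₀ _ (hf.deriv_ne_zero hz)]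
  calc ‖deriv (deriv h) z‖ * Real.exp (-s)
      = Real.exp (-s) * ‖pd h z‖ * ‖deriv h z‖ := by rw [hpd, norm_mul]; ring
    _ ≤ Real.exp (-s) * (1 / (1 - ‖z‖ ^ 2)
          + β / ((1 - ‖z‖ ^ 2) * Real.log (1 / (1 - ‖z‖ ^ 2))) + ‖z‖ / (1 - ‖z‖ ^ 2))
          * ‖deriv h z‖ := by
        gcongr
        exact (hf.norm_pd_le hg0 hz1).trans (by gcongr; exact hP z (ht ▸ hr₀) hz1)
    _ ≤ (1 + β / 2 / s) * ‖deriv h z‖ := by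
        gcongr
        exact exp_neg_mul_le_one_add hβ hs ht

lemma exists_norm_deriv_diskRay_le (hf : SPH h g) (hg0 : deriv g 0 = 0) (hβ : β ≤ 0)
    (hP : ∀ z : ℂ, r₀ < ‖z‖ → ‖z‖ < 1 →
      ‖PH h g z‖ ≤ 1 / (1 - ‖z‖ ^ 2) + β / ((1 - ‖z‖ ^ 2) * Real.log (1 / (1 - ‖z‖ ^ 2))))
    {a : ℝ} (ha : 0 < a) (hr₀ : r₀ < 1 - Real.exp (-a)) :
    ∃ C, 0 ≤ C ∧ ∀ e : ℂ, ‖e‖ = 1 → ∀ s, a ≤ s →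
      ‖deriv h (diskRay e s)‖ ≤ C * (Real.exp s * s ^ (β / 2)) := by
  set r := 1 - Real.exp (-a)
  have hr1 : r < 1 := by linarith [Real.exp_pos (-a)]
  obtain ⟨M, hM⟩ := (isCompact_closedBall (0 : ℂ) r).exists_bound_of_continuousOn
    (hf.differentiableOn_deriv.continuousOn.mono (closedBall_subset_ball hr1))
  have hMa : ∀ e : ℂ, ‖e‖ = 1 → ‖deriv h (diskRay e a)‖ ≤ M := fun e he ↦
    hM _ (mem_closedBall_zero_iff.2 (norm_diskRay he ha.le).le)
  refine ⟨M * Real.exp (-a) * a ^ (-(β / 2)),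
    by have := (norm_nonneg _).trans (hMa 1 norm_one); positivity, fun e he s has ↦ ?_⟩
  have hs0 : 0 ≤ Real.exp s * s ^ (β / 2) :=
    mul_nonneg (Real.exp_pos s).le (Real.rpow_nonneg (ha.le.trans has) _)
  calc ‖deriv h (diskRay e s)‖
      ≤ ‖deriv h (diskRay e a)‖ * Real.exp (-a) * a ^ (-(β / 2)) * (Real.exp s * s ^ (β / 2)) :=
        norm_diskRay_le_of_norm_deriv_le hf.differentiableOn_deriv he ha has fun t ht ↦
          hf.norm_deriv_deriv_diskRay_le hg0 hβ hP he (ha.trans ht.1)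
            (hr₀.trans_le (sub_le_sub_left (Real.exp_le_exp.2 (neg_le_neg ht.1.le)) 1))
    _ ≤ M * Real.exp (-a) * a ^ (-(β / 2)) * (Real.exp s * s ^ (β / 2)) := by
        gcongr; exact hMa e he

end SPH

theorem stmt17_general (h g : ℂ → ℂ) (hf : SPH h g)
    (hg0 : deriv g 0 = 0)
    (β r₀ : ℝ) (hβ : β < -2) (hr₁ : r₀ < 1)
    (hP : ∀ z : ℂ, r₀ < ‖z‖ → ‖z‖ < 1 →
        ‖PH h g z‖ ≤ 1 / (1 - ‖z‖ ^ 2) +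
          β / ((1 - ‖z‖ ^ 2) * Real.log (1 / (1 - ‖z‖ ^ 2)))) :
    ∃ M : ℝ, ∀ z ∈ Metric.ball (0 : ℂ) 1,
      ‖h z‖ ≤ M ∧ ‖g z‖ ≤ M ∧ ‖h z + (starRingEnd ℂ) (g z)‖ ≤ M := by
  have hray : Tendsto (fun a ↦ 1 - Real.exp (-a)) atTop (𝓝 1) := by
    simpa using Real.tendsto_exp_neg_atTop_nhds_zero.const_sub (1 : ℝ)
  obtain ⟨a, ha, har₀⟩ :=
    ((eventually_gt_atTop 0).and (hray.eventually (lt_mem_nhds hr₁))).exists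
  obtain ⟨C, hC, hgrowth⟩ := hf.exists_norm_deriv_diskRay_le hg0 (by linarith) hP ha har₀
  have hp : β / 2 < -1 := by linarith
  obtain ⟨Mh, hMh⟩ := exists_norm_le_of_norm_sub_diskRay_le hf.1.continuousOn ha
    fun e he S hS ↦ norm_sub_diskRay_le hf.1 he hp ha hS hC fun s hs ↦ hgrowth e he s hs.1
  obtain ⟨Mg, hMg⟩ := exists_norm_le_of_norm_sub_diskRay_le hf.2.1.continuousOn ha
    fun e he S hS ↦ norm_sub_diskRay_le hf.2.1 he hp ha hS hC fun s hs ↦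
      (hf.2.2.2 _ (diskRay_mem_ball he (ha.le.trans hs.1))).le.trans (hgrowth e he s hs.1)
  have h0 : (0 : ℂ) ∈ ball (0 : ℂ) 1 := mem_ball_self one_pos
  have hMh0 := (norm_nonneg _).trans (hMh 0 h0)
  have hMg0 := (norm_nonneg _).trans (hMg 0 h0)
  refine ⟨Mh + Mg, fun z hz ↦ ⟨by linarith [hMh z hz], by linarith [hMg z hz], ?_⟩⟩
  calc ‖h z + conj (g z)‖ ≤ ‖h z‖ + ‖g z‖ :=
        (norm_add_le _ _).trans_eq (by rw [RCLike.norm_conj])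
    _ ≤ Mh + Mg := add_le_add (hMh z hz) (hMg z hz)

theorem stmt17 (h g : ℂ → ℂ) (hf : SPH h g)
    (h1 : deriv h 0 = 1) (hg0 : deriv g 0 = 0)
    (β r₀ : ℝ) (hβ : β < -2) (hr₀ : 1 - 1 / (2 * Real.exp 1) < r₀) (hr₁ : r₀ < 1)
    (hP : ∀ z : ℂ, r₀ < ‖z‖ → ‖z‖ < 1 →
        ‖PH h g z‖ ≤ 1 / (1 - ‖z‖ ^ 2) +
          β / ((1 - ‖z‖ ^ 2) * Real.log (1 / (1 - ‖z‖ ^ 2)))) :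
    ∃ M : ℝ, ∀ z ∈ Metric.ball (0 : ℂ) 1,
      ‖h z‖ ≤ M ∧ ‖g z‖ ≤ M ∧ ‖h z + (starRingEnd ℂ) (g z)‖ ≤ M :=
  stmt17_general h g hf hg0 β r₀ hβ hr₁ hP
end

section
/- Subordination principle for the pre-Schwarzian norm: let f = h + conj(g) and F = H + conj(G) be harmonic mappings in D with F sense-preserving and ||P_F|| < ∞. If there exists an analytic map φ: D → D with h' = H'∘φ and g' = G'∘φ, then f is sense-preserving, P_f(z) = P_F(φ(z))·φ'(z) for all z ∈ D, and ||P_f|| ≤ ||P_F||. -/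
open Complex Metric

/-!
The dilatations satisfy `ω_f = ω_F ∘ φ` and `h' = H' ∘ φ`, so every term of `P_f` is the
corresponding term of `P_F` at `φ z`, except that the two derivatives `h''` and `ω_f'` pick up
the factor `φ'` by the chain rule; hence `P_f = (P_F ∘ φ) φ'`. The Schwarz–Pick inequality
`(1 - |z|²) |φ'(z)| ≤ 1 - |φ(z)|²` then bounds each weighted value `(1 - |z|²) |P_f(z)|` by a
weighted value of `P_F`. Schwarz–Pick itself is the Schwarz lemma applied to `φ` conjugated by
the disk automorphisms exchanging `0` with `z` and with `φ(z)`.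
-/

open ComplexConjugate Set Filter Topology

noncomputable def diskAutomorphism (a w : ℂ) : ℂ := (a - w) / (1 - conj a * w)

section DiskAutomorphism

variable {a w : ℂ}

lemma one_sub_conj_mul_ne_zero (ha : ‖a‖ < 1) (hw : ‖w‖ < 1) : 1 - conj a * w ≠ 0 := by
  refine sub_ne_zero.2 fun h => ?_
  have : ‖conj a * w‖ < 1 := by
    rw [norm_mul, RCLike.norm_conj]
    exact mul_lt_one_of_nonneg_of_lt_one_left (norm_nonneg a) ha hw.le
  rw [← h, norm_one] at this
  exact lt_irrefl _ this

lemma normSq_one_sub_conj_mul_sub_normSq_sub (a w : ℂ) :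
    normSq (1 - conj a * w) - normSq (a - w) = (1 - normSq a) * (1 - normSq w) := by
  simp only [normSq_apply, sub_re, sub_im, mul_re, mul_im, conj_re, conj_im, one_re, one_im]
  ring

lemma mapsTo_diskAutomorphism (ha : ‖a‖ < 1) :
    MapsTo (diskAutomorphism a) (ball 0 1) (ball 0 1) := by
  intro w hw
  rw [mem_ball_zero_iff] at hw ⊢
  rw [diskAutomorphism, norm_div, div_lt_one (norm_pos_iff.2 (one_sub_conj_mul_ne_zero ha hw))]
  have key := normSq_one_sub_conj_mul_sub_normSq_sub a w
  simp only [normSq_eq_norm_sq] at key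
  have hpos : 0 < (1 - ‖a‖ ^ 2) * (1 - ‖w‖ ^ 2) :=
    mul_pos (sub_pos.2 (pow_lt_one₀ (norm_nonneg a) ha two_ne_zero))
      (sub_pos.2 (pow_lt_one₀ (norm_nonneg w) hw two_ne_zero))
  exact lt_of_pow_lt_pow_left₀ 2 (norm_nonneg _) (by linarith)

lemma hasDerivAt_diskAutomorphism (hw : 1 - conj a * w ≠ 0) :
    HasDerivAt (diskAutomorphism a) ((conj a * a - 1) / (1 - conj a * w) ^ 2) w := by
  have hnum : HasDerivAt (fun x : ℂ => a - x) (-1) w := by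
    simpa using (hasDerivAt_id w).const_sub a
  have hden : HasDerivAt (fun x : ℂ => 1 - conj a * x) (-conj a) w := by
    simpa using ((hasDerivAt_id w).const_mul (conj a)).const_sub 1
  exact (hnum.div hden hw).congr_deriv (by ring)

lemma differentiableOn_diskAutomorphism (ha : ‖a‖ < 1) :
    DifferentiableOn ℂ (diskAutomorphism a) (ball 0 1) := fun _ hw =>
  (hasDerivAt_diskAutomorphism (one_sub_conj_mul_ne_zero ha (mem_ball_zero_iff.1 hw)))
    |>.differentiableAt.differentiableWithinAt

@[simp] lemma diskAutomorphism_zero : diskAutomorphism a 0 = a := by simp [diskAutomorphism]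

@[simp] lemma diskAutomorphism_self : diskAutomorphism a a = 0 := by simp [diskAutomorphism]

lemma hasDerivAt_diskAutomorphism_zero :
    HasDerivAt (diskAutomorphism a) ((‖a‖ ^ 2 - 1 : ℝ) : ℂ) 0 := by
  convert hasDerivAt_diskAutomorphism (a := a) (w := 0) (by simp) using 1
  simp [conj_mul']

lemma hasDerivAt_diskAutomorphism_self (ha : ‖a‖ < 1) :
    HasDerivAt (diskAutomorphism a) ((-(1 - ‖a‖ ^ 2)⁻¹ : ℝ) : ℂ) a := by
  have hne : (1 : ℂ) - (‖a‖ : ℂ) ^ 2 ≠ 0 := by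
    rw [← conj_mul']
    exact one_sub_conj_mul_ne_zero ha ha
  convert hasDerivAt_diskAutomorphism (one_sub_conj_mul_ne_zero ha ha) using 1
  rw [conj_mul']
  push_cast
  field_simp
  ring

end DiskAutomorphism

theorem one_sub_sq_mul_norm_deriv_le_of_mapsTo_ball {φ : ℂ → ℂ}
    (hφ : DifferentiableOn ℂ φ (ball 0 1)) (hmap : MapsTo φ (ball 0 1) (ball 0 1))
    {z : ℂ} (hz : z ∈ ball (0 : ℂ) 1) :
    (1 - ‖z‖ ^ 2) * ‖deriv φ z‖ ≤ 1 - ‖φ z‖ ^ 2 := by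
  have hz1 : ‖z‖ < 1 := mem_ball_zero_iff.1 hz
  have hb1 : ‖φ z‖ < 1 := mem_ball_zero_iff.1 (hmap hz)
  set ψ := diskAutomorphism (φ z) ∘ φ ∘ diskAutomorphism z
  have hψmap : MapsTo ψ (ball 0 1) (ball 0 1) :=
    (mapsTo_diskAutomorphism hb1).comp (hmap.comp (mapsTo_diskAutomorphism hz1))
  have hψ : DifferentiableOn ℂ ψ (ball 0 1) :=
    (differentiableOn_diskAutomorphism hb1).comp
      (hφ.comp (differentiableOn_diskAutomorphism hz1) (mapsTo_diskAutomorphism hz1))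
      (hmap.comp (mapsTo_diskAutomorphism hz1))
  have hψ0 : ψ 0 = 0 := by simp [ψ]
  have hschwarz : ‖deriv ψ 0‖ ≤ 1 :=
    Complex.norm_deriv_le_one_of_mapsTo_ball (c := 0) hψ
      (by rw [hψ0]; exact hψmap.mono_right ball_subset_closedBall) one_pos
  have hφz : HasDerivAt φ (deriv φ z) (diskAutomorphism z 0) := by
    rw [diskAutomorphism_zero]
    exact (hφ.differentiableAt (isOpen_ball.mem_nhds hz)).hasDerivAt
  have hb : HasDerivAt (diskAutomorphism (φ z)) ((-(1 - ‖φ z‖ ^ 2)⁻¹ : ℝ) : ℂ)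
      ((φ ∘ diskAutomorphism z) 0) := by
    simpa using hasDerivAt_diskAutomorphism_self hb1
  -- the chain rule gives `ψ' 0 = -(1 - ‖φ z‖²)⁻¹ * (φ' z * (‖z‖² - 1))`
  rw [(hb.comp 0 (hφz.comp 0 hasDerivAt_diskAutomorphism_zero)).deriv, norm_mul, norm_mul,
    norm_real, norm_real, Real.norm_eq_abs, Real.norm_eq_abs, abs_neg,
    abs_of_pos (inv_pos.2 (sub_pos.2 (pow_lt_one₀ (norm_nonneg _) hb1 two_ne_zero))),
    abs_of_nonpos (sub_nonpos.2 (pow_le_one₀ (norm_nonneg z) hz1.le)),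
    inv_mul_le_iff₀ (sub_pos.2 (pow_lt_one₀ (norm_nonneg _) hb1 two_ne_zero))] at hschwarz
  linarith

theorem PH_eq_comp_mul_deriv {h g H G φ : ℂ → ℂ} {z : ℂ}
    (hh : deriv h =ᶠ[𝓝 z] deriv H ∘ φ) (hg : deriv g =ᶠ[𝓝 z] deriv G ∘ φ)
    (hφ : DifferentiableAt ℂ φ z) (hH : DifferentiableAt ℂ (deriv H) (φ z))
    (hG : DifferentiableAt ℂ (deriv G) (φ z)) (hH0 : deriv H (φ z) ≠ 0) :
    PH h g z = PH H G (φ z) * deriv φ z := by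
  have hdil : dil h g =ᶠ[𝓝 z] dil H G ∘ φ :=
    hg.mp (hh.mono fun y hhy hgy => by simp only [dil, hhy, hgy, Function.comp_apply])
  have hdilH : DifferentiableAt ℂ (dil H G) (φ z) := hG.div hH hH0
  rw [PH, PH, pd, pd, hh.deriv_eq, hdil.deriv_eq, deriv_comp z hH hφ, deriv_comp z hdilH hφ,
    hh.eq_of_nhds, hdil.eq_of_nhds, Function.comp_apply, Function.comp_apply]
  ring

theorem pnorm_le_of_eq_comp_mul_deriv {P Q φ : ℂ → ℂ} (hQ : pbdd Q)
    (hφ : DifferentiableOn ℂ φ (ball 0 1)) (hmap : MapsTo φ (ball 0 1) (ball 0 1))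
    (hPQ : ∀ z ∈ ball (0 : ℂ) 1, P z = Q (φ z) * deriv φ z) :
    pnorm P ≤ pnorm Q := by
  have : Nonempty (ball (0 : ℂ) 1) := ⟨⟨0, mem_ball_self one_pos⟩⟩
  refine ciSup_le fun ⟨z, hz⟩ => ?_
  calc (1 - ‖z‖ ^ 2) * ‖P z‖ = (1 - ‖z‖ ^ 2) * ‖deriv φ z‖ * ‖Q (φ z)‖ := by
        rw [hPQ z hz, norm_mul]; ring
    _ ≤ (1 - ‖φ z‖ ^ 2) * ‖Q (φ z)‖ := by
        gcongr
        exact one_sub_sq_mul_norm_deriv_le_of_mapsTo_ball hφ hmap hz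
    _ ≤ pnorm Q := le_ciSup hQ ⟨φ z, hmap hz⟩

theorem stmt18_general (h g H G φ : ℂ → ℂ)
    (hF : SPH H G) (hFfin : pbdd (PH H G))
    (hφ : DifferentiableOn ℂ φ (Metric.ball (0 : ℂ) 1))
    (hφmap : Set.MapsTo φ (Metric.ball (0 : ℂ) 1) (Metric.ball (0 : ℂ) 1))
    (hsub : ∀ z ∈ Metric.ball (0 : ℂ) 1,
        deriv h z = deriv H (φ z) ∧ deriv g z = deriv G (φ z)) :
    (∀ z ∈ Metric.ball (0 : ℂ) 1, ‖deriv g z‖ < ‖deriv h z‖) ∧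
    (∀ z ∈ Metric.ball (0 : ℂ) 1, PH h g z = PH H G (φ z) * deriv φ z) ∧
    pnorm (PH h g) ≤ pnorm (PH H G) := by
  obtain ⟨hH, hG, -, hFsp⟩ := hF
  have hsp : ∀ z ∈ ball (0 : ℂ) 1, ‖deriv g z‖ < ‖deriv h z‖ := fun z hz => by
    rw [(hsub z hz).1, (hsub z hz).2]
    exact hFsp _ (hφmap hz)
  have hcomp : ∀ z ∈ ball (0 : ℂ) 1, PH h g z = PH H G (φ z) * deriv φ z := by
    intro z hz
    have hw := hφmap hz
    have near : ∀ᶠ y in 𝓝 z, y ∈ ball (0 : ℂ) 1 := isOpen_ball.eventually_mem hz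
    exact PH_eq_comp_mul_deriv (near.mono fun y hy => (hsub y hy).1)
      (near.mono fun y hy => (hsub y hy).2) (hφ.differentiableAt (isOpen_ball.mem_nhds hz))
      ((hH.deriv isOpen_ball).differentiableAt (isOpen_ball.mem_nhds hw))
      ((hG.deriv isOpen_ball).differentiableAt (isOpen_ball.mem_nhds hw))
      (norm_pos_iff.1 ((norm_nonneg _).trans_lt (hFsp _ hw)))
  exact ⟨hsp, hcomp, pnorm_le_of_eq_comp_mul_deriv hFfin hφ hφmap hcomp⟩

theorem stmt18 (h g H G φ : ℂ → ℂ)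
    (hh : DifferentiableOn ℂ h (Metric.ball (0 : ℂ) 1))
    (hg : DifferentiableOn ℂ g (Metric.ball (0 : ℂ) 1))
    (hF : SPH H G) (hFfin : pbdd (PH H G))
    (hφ : DifferentiableOn ℂ φ (Metric.ball (0 : ℂ) 1))
    (hφmap : Set.MapsTo φ (Metric.ball (0 : ℂ) 1) (Metric.ball (0 : ℂ) 1))
    (hsub : ∀ z ∈ Metric.ball (0 : ℂ) 1,
        deriv h z = deriv H (φ z) ∧ deriv g z = deriv G (φ z)) :
    (∀ z ∈ Metric.ball (0 : ℂ) 1, ‖deriv g z‖ < ‖deriv h z‖) ∧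
    (∀ z ∈ Metric.ball (0 : ℂ) 1, PH h g z = PH H G (φ z) * deriv φ z) ∧
    pnorm (PH h g) ≤ pnorm (PH H G) :=
  stmt18_general h g H G φ hF hFfin hφ hφmap hsub
end
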